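/- arXiv:1810.10860 — 7 statements merged into one kernel-verified Lean document; each statement's English description precedes it below -/
import Mathlib

section
/- The number of arrays [N(i,j)]_{0 ≤ j < i ≤ H} of nonnegative integers satisfying N(i,i-1) ≥ 1 and Σ_{j=0}^{i-1} N(i,j) ≤ d for all 1 ≤ i ≤ H equals ∏_{i=1}^{H} C(d + i - 1, i). -/
/-!
The constraints act row by row, so the arrays form a product over the rows `i ≤ H`. In row `i`,
lowering the last entry by one turns the admissible rows into the `i`-tuples of sum `< d`. For
`d ≥ 1` a slack coordinate turns those into the `(i + 1)`-tuples of sum exactly `d - 1`, counted by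
stars and bars as `C(d + i - 1, i)`; for `d = 0` both sides vanish. The empty row `i = 0` contributes
`C(d - 1, 0) = 1`.
-/

open Finset

section WeakCompositions

variable {α : Type*} [DecidableEq α]

theorem tsub_single_one_add_single_one {f : α → ℕ} {i : α} (hf : 1 ≤ f i) :
    f - Pi.single i 1 + Pi.single i 1 = f := by
  ext a
  refine tsub_add_cancel_of_le ?_
  rcases eq_or_ne a i with rfl | ha
  · simpa using hf
  · simp [ha]

variable [Fintype α]

theorem card_fun_sum_eq (n : ℕ) :
    Nat.card {f : α → ℕ // ∑ a, f a = n} = (Fintype.card α + n - 1).choose n := by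
  rw [← Nat.card_congr (Sym.equivNatSumOfFintype α n), Nat.card_eq_fintype_card,
    Sym.card_sym_eq_choose]

def sumLeEquivSumEqOption (m : ℕ) :
    {f : α → ℕ // ∑ a, f a ≤ m} ≃ {P : Option α → ℕ // ∑ o, P o = m} where
  toFun f := ⟨fun o => o.elim (m - ∑ a, f.1 a) f.1, by
    rw [Fintype.sum_option]; exact Nat.sub_add_cancel f.2⟩
  invFun P := ⟨fun a => P.1 (some a), by
    have h := P.2; rw [Fintype.sum_option] at h; show ∑ a, P.1 (some a) ≤ m; omega⟩
  left_inv f := rfl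
  right_inv P := by
    obtain ⟨P, hP⟩ := P
    rw [Fintype.sum_option] at hP
    ext (_ | a)
    · simp only [Option.elim_none]; omega
    · rfl

theorem card_fun_sum_le (m : ℕ) :
    Nat.card {f : α → ℕ // ∑ a, f a ≤ m} = (m + Fintype.card α).choose m := by
  rw [Nat.card_congr (sumLeEquivSumEqOption m), card_fun_sum_eq, Fintype.card_option]
  congr 1
  omega

theorem sum_add_single_one (g : α → ℕ) (i : α) :
    ∑ a, (g + Pi.single i 1 : α → ℕ) a = ∑ a, g a + 1 := by
  simp [sum_add_distrib]

def sumLtEquivOneLe (d : ℕ) (i : α) :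
    {g : α → ℕ // ∑ a, g a < d} ≃ {f : α → ℕ // 1 ≤ f i ∧ ∑ a, f a ≤ d} where
  toFun g := ⟨g.1 + Pi.single i 1, by simp, by rw [sum_add_single_one]; exact g.2⟩
  invFun f := ⟨f.1 - Pi.single i 1, by
    have h := sum_add_single_one (f.1 - Pi.single i 1) i
    rw [tsub_single_one_add_single_one f.2.1] at h
    omega⟩
  left_inv g := Subtype.ext (add_tsub_cancel_right _ _)
  right_inv f := Subtype.ext (tsub_single_one_add_single_one f.2.1)

theorem card_one_le_apply_sum_le (d : ℕ) (i : α) :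
    Nat.card {f : α → ℕ // 1 ≤ f i ∧ ∑ a, f a ≤ d} =
      (d + Fintype.card α - 1).choose (Fintype.card α) := by
  rw [← Nat.card_congr (sumLtEquivOneLe d i)]
  rcases d with _ | m
  · have : 0 < Fintype.card α := Fintype.card_pos_iff.2 ⟨i⟩
    simp [Nat.choose_eq_zero_of_lt (by omega : Fintype.card α - 1 < Fintype.card α)]
  · simp only [Nat.lt_succ_iff, card_fun_sum_le]
    rw [Nat.choose_symm_add]
    congr 1
    omega

end WeakCompositions

theorem card_one_le_last_sum_le (n d : ℕ) :
    Nat.card {f : Fin n → ℕ // ∀ h : 0 < n, 1 ≤ f ⟨n - 1, by omega⟩ ∧ ∑ j, f j ≤ d} =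
      (d + n - 1).choose n := by
  rcases n with _ | k
  · simp
  · rw [Nat.card_congr (Equiv.subtypeEquivRight fun f => forall_prop_of_true k.succ_pos)]
    exact (card_one_le_apply_sum_le d (Fin.last k)).trans (by simp)

/-- The number of arrays `[N(i,j)]_{0 ≤ j < i ≤ H}` of nonnegative integers with
`N(i, i-1) ≥ 1` and `∑_{j=0}^{i-1} N(i,j) ≤ d` for all `1 ≤ i ≤ H` equals
`∏_{i=1}^{H} C(d + i - 1, i)`. -/
theorem stmt_2 (H d : ℕ) :
    Nat.card {N : (i : Fin (H + 1)) → Fin i.val → ℕ //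
        ∀ i : Fin (H + 1), ∀ h : 0 < i.val,
          1 ≤ N i ⟨i.val - 1, by omega⟩ ∧ ∑ j, N i j ≤ d} =
      ∏ i ∈ Finset.Icc 1 H, Nat.choose (d + i - 1) i := by
  rw [Nat.card_congr (Equiv.subtypePiEquivPi (p := fun (i : Fin (H + 1)) (f : Fin i → ℕ) =>
      ∀ h : 0 < i.val, 1 ≤ f ⟨i.val - 1, by omega⟩ ∧ ∑ j, f j ≤ d)), Nat.card_pi]
  simp only [card_one_le_last_sum_le]
  rw [Fin.prod_univ_eq_prod_range (fun i => (d + i - 1).choose i), range_eq_Ico,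
    prod_eq_prod_Ico_succ_bot (by omega : 0 < H + 1), Ico_add_one_right_eq_Icc]
  simp
end

section
/- Define u_0(d) = 1 and u_H(d) = C(u_{H-1}(d) + d, d). Then for every H ≥ 2 and d ≥ 2, u_H(d) ≥ (2 + 1/d)^{d^{H-1}} / d^{(d^{H-1}-1)/(d-1) - 1}. -/
/-!
From `C(n, k) ≥ (n/k)^k` we get `u_{H+1} ≥ (u_H / d)^d` and `u_2 = C(2d+1, d) ≥ (2 + 1/d)^d`.
Iterating `y ↦ (y/d)^d` from `(2 + 1/d)^d` multiplies the exponent of `2 + 1/d` by `d` and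
turns the exponent `E` of `d` into `d (E + 1)`, so after `H - 2` steps that exponent is
`d + d² + ⋯ + d^{H-2} = (d^{H-1} - 1)/(d - 1) - 1`.
-/

/-- `u_0(d) = 1`, `u_H(d) = C(u_{H-1}(d) + d, d)`. -/
def u (d : ℕ) : ℕ → ℕ
  | 0 => 1
  | H + 1 => Nat.choose (u d H + d) d

open Finset

theorem div_pow_le_choose {α : Type*} [Field α] [LinearOrder α] [IsStrictOrderedRing α]
    {n k : ℕ} (h : k ≤ n) : ((n : α) / k) ^ k ≤ n.choose k := by
  induction k generalizing n with
  | zero => simp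
  | succ k ih =>
    obtain ⟨m, rfl⟩ : ∃ m, n = m + 1 := ⟨n - 1, by omega⟩
    rcases Nat.eq_zero_or_pos k with rfl | hk
    · simp
    set q : α := ((m + 1 : ℕ) : α) / (k + 1 : ℕ)
    have hq : q ≤ (m : α) / k := by
      rw [div_le_div_iff₀ (by positivity) (by positivity)]
      push_cast
      nlinarith [(Nat.cast_le (α := α)).2 (show k ≤ m by omega)]
    have hstep : q * m.choose k = (m + 1).choose (k + 1) := by
      rw [div_mul_eq_mul_div, div_eq_iff (by positivity)]
      exact_mod_cast Nat.add_one_mul_choose_eq m k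
    calc q ^ (k + 1) = q * q ^ k := pow_succ' _ _
      _ ≤ q * ((m : α) / k) ^ k := by gcongr
      _ ≤ q * m.choose k := by gcongr; exact ih (by omega)
      _ = (m + 1).choose (k + 1) := hstep

theorem div_pow_le_u_succ (d H : ℕ) : ((u d H : ℝ) / d) ^ d ≤ u d (H + 1) := by
  calc ((u d H : ℝ) / d) ^ d ≤ ((u d H + d : ℕ) / (d : ℝ)) ^ d := by
        gcongr; exact_mod_cast Nat.le_add_right _ _
    _ ≤ u d (H + 1) := div_pow_le_choose (by omega)

theorem two_add_inv_pow_le_u_two (d : ℕ) : (2 + 1 / (d : ℝ)) ^ d ≤ u d 2 := by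
  rcases Nat.eq_zero_or_pos d with rfl | hd
  · simp [u]
  have hu1 : u d 1 = d + 1 := by simp [u, add_comm 1 d]
  calc (2 + 1 / (d : ℝ)) ^ d = ((u d 1 + d : ℕ) / (d : ℝ)) ^ d := by
        rw [hu1]; push_cast; field_simp; ring
    _ ≤ u d 2 := div_pow_le_choose (by omega)

theorem bound_le_u_add_two (d H : ℕ) :
    (2 + 1 / (d : ℝ)) ^ (d ^ (H + 1)) / (d : ℝ) ^ (d * ∑ i ∈ range H, d ^ i)
      ≤ u d (H + 2) := by
  induction H with
  | zero => simpa using two_add_inv_pow_le_u_two d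
  | succ H ih =>
    set b : ℝ := 2 + 1 / (d : ℝ)
    calc b ^ (d ^ (H + 2)) / (d : ℝ) ^ (d * ∑ i ∈ range (H + 1), d ^ i)
        = (b ^ (d ^ (H + 1)) / (d : ℝ) ^ (d * ∑ i ∈ range H, d ^ i) / d) ^ d := by
          rw [geom_sum_succ, div_div, div_pow, mul_pow, ← pow_mul, ← pow_mul, ← pow_add]
          ring_nf
      _ ≤ ((u d (H + 2) : ℝ) / d) ^ d := by gcongr
      _ ≤ u d (H + 3) := div_pow_le_u_succ d (H + 2)

/-- For `H ≥ 2` and `d ≥ 2`,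
`u_H(d) ≥ (2 + 1/d)^{d^{H-1}} / d^{(d^{H-1}-1)/(d-1) - 1}`. -/
theorem stmt_3 (H d : ℕ) (hH : 2 ≤ H) (hd : 2 ≤ d) :
    (u d H : ℝ) ≥
      (2 + 1 / (d : ℝ)) ^ ((d : ℝ) ^ (H - 1)) /
        (d : ℝ) ^ (((d : ℝ) ^ (H - 1) - 1) / ((d : ℝ) - 1) - 1) := by
  obtain ⟨K, rfl⟩ : ∃ K, H = K + 2 := ⟨H - 2, by omega⟩
  have hd1 : (d : ℝ) ≠ 1 := by exact_mod_cast (by omega : d ≠ 1)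
  have hexp : ((d : ℝ) ^ (K + 1) - 1) / ((d : ℝ) - 1) - 1 =
      ((d * ∑ i ∈ range K, d ^ i : ℕ) : ℝ) := by
    rw [← geom_sum_eq hd1, geom_sum_succ]
    push_cast
    ring
  rw [show K + 2 - 1 = K + 1 by omega, hexp, ← Nat.cast_pow, Real.rpow_natCast, Real.rpow_natCast]
  exact bound_le_u_add_two d K
end

section
/- Define u_0(d) = 1 and u_H(d) = C(u_{H-1}(d) + d, d). Then for every H ≥ 2 and d ≥ 2, u_H(d) ≤ 3^{d^{H-1}} · e^{(d^H - 1)/(d-1) - 1}. -/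
/-- `C(n,d) ≤ (n e / d)^d`. -/
lemma choose_le_aux (n d : ℕ) (hd : 0 < d) :
    ((n.choose d : ℕ) : ℝ) ≤ ((n : ℝ) * Real.exp 1 / d) ^ d := by
  have hf : (0 : ℝ) < d.factorial := by positivity
  have hdd : (0 : ℝ) < (d : ℝ) ^ d := by positivity
  have h1 : ((n.choose d : ℕ) : ℝ) ≤ (n : ℝ) ^ d / d.factorial :=
    Nat.choose_le_pow_div d n
  have h2 : (d : ℝ) ^ d / d.factorial ≤ Real.exp d :=
    Real.pow_div_factorial_le_exp (d : ℝ) (by positivity) d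
  have key : (d : ℝ) ^ d ≤ Real.exp d * d.factorial := by
    rw [div_le_iff₀ hf] at h2; exact h2
  have hedn : Real.exp d = Real.exp 1 ^ d := by
    rw [← Real.exp_nat_mul]; norm_num
  refine h1.trans ?_
  rw [div_pow, mul_pow, div_le_div_iff₀ hf hdd]
  have hn : (0 : ℝ) ≤ (n : ℝ) ^ d := by positivity
  calc (n : ℝ) ^ d * (d : ℝ) ^ d ≤ (n : ℝ) ^ d * (Real.exp d * d.factorial) :=
        mul_le_mul_of_nonneg_left key hn
    _ = (n : ℝ) ^ d * Real.exp 1 ^ d * d.factorial := by rw [hedn]; ring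

lemma step_aux (d m : ℕ) (X : ℝ) (hd : 2 ≤ d) (hX : 2 ≤ X) (hm : (m : ℝ) ≤ X) :
    (((m + d).choose d : ℕ) : ℝ) ≤ (Real.exp 1 * X) ^ d := by
  have hd0 : (0 : ℝ) < d := by positivity
  refine (choose_le_aux (m + d) d (by omega)).trans ?_
  have hX0 : (0 : ℝ) ≤ X := by linarith
  have h1 : ((m : ℝ) + d) / d ≤ X := by
    have h2 : (m : ℝ) / d ≤ X / 2 := by
      exact div_le_div₀ hX0 hm (by norm_num) (by exact_mod_cast hd)
    have : ((m : ℝ) + d) / d = (m : ℝ) / d + 1 := by field_simp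
    rw [this]; linarith
  apply pow_le_pow_left₀ (by positivity)
  push_cast
  calc ((m : ℝ) + d) * Real.exp 1 / d = Real.exp 1 * (((m : ℝ) + d) / d) := by ring
    _ ≤ Real.exp 1 * X := by
        exact mul_le_mul_of_nonneg_left h1 (Real.exp_pos 1).le

/-- For `H ≥ 2` and `d ≥ 2`, `u_H(d) ≤ 3^{d^{H-1}} · e^{(d^H - 1)/(d-1) - 1}`. -/
theorem stmt_4 (H d : ℕ) (hH : 2 ≤ H) (hd : 2 ≤ d) :
    (u d H : ℝ) ≤
      (3 : ℝ) ^ ((d : ℝ) ^ (H - 1)) *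
        Real.exp (((d : ℝ) ^ H - 1) / ((d : ℝ) - 1) - 1) := by
  have hd1 : (1 : ℝ) ≤ (d : ℝ) - 1 := by
    have : (2 : ℝ) ≤ d := by exact_mod_cast hd
    linarith
  have hdne : (d : ℝ) - 1 ≠ 0 := by linarith
  induction H, hH using Nat.le_induction with
  | base =>
    have hu1 : u d 1 = d + 1 := by
      show (1 + d).choose d = d + 1
      rw [Nat.add_comm, Nat.choose_succ_self_right]
    have hu2 : u d 2 = (d + 1 + d).choose d := by
      show (u d 1 + d).choose d = _
      rw [hu1]
    have hb : ((u d 2 : ℕ) : ℝ) ≤ (Real.exp 1 * 3) ^ d := by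
      rw [hu2]
      have : (d + 1 + d) = (2 * d + 1) := by ring
      rw [this]
      refine (choose_le_aux (2 * d + 1) d (by omega)).trans ?_
      apply pow_le_pow_left₀ (by positivity)
      rw [div_le_iff₀ (by positivity : (0:ℝ) < (d:ℝ))]
      push_cast
      nlinarith [Real.exp_pos 1, (by exact_mod_cast hd : (2:ℝ) ≤ d), Real.add_one_le_exp 1]
    have hexp : ((d : ℝ) ^ 2 - 1) / ((d : ℝ) - 1) - 1 = (d : ℝ) := by
      field_simp; ring
    rw [hexp]
    have h31 : ((d : ℝ) ^ (2 - 1)) = (d : ℝ) := by norm_num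
    rw [h31]
    calc ((u d 2 : ℕ) : ℝ) ≤ (Real.exp 1 * 3) ^ d := hb
      _ = 3 ^ (d : ℕ) * Real.exp d := by
          rw [mul_pow, ← Real.exp_nat_mul]; ring_nf
      _ = (3 : ℝ) ^ ((d : ℝ)) * Real.exp d := by
          rw [Real.rpow_natCast]
  | succ n hn ih =>
    set A : ℝ := (d : ℝ) ^ (n - 1) with hA
    set s : ℝ := ((d : ℝ) ^ n - 1) / ((d : ℝ) - 1) - 1 with hs
    set X : ℝ := (3 : ℝ) ^ A * Real.exp s with hXdef
    have hA1 : (1 : ℝ) ≤ A := by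
      apply one_le_pow₀
      have : (2 : ℝ) ≤ d := by exact_mod_cast hd
      linarith
    have h3A : (3 : ℝ) ≤ (3 : ℝ) ^ A := by
      calc (3 : ℝ) = (3 : ℝ) ^ (1 : ℝ) := by norm_num
        _ ≤ (3 : ℝ) ^ A := by
            apply Real.rpow_le_rpow_of_exponent_le (by norm_num) hA1
    have hs0 : 0 ≤ s := by
      rw [hs, sub_nonneg, le_div_iff₀ (by linarith)]
      have : (d : ℝ) ≤ (d : ℝ) ^ n :=
        le_self_pow₀ (by linarith) (by omega)
      linarith
    have hX2 : (2 : ℝ) ≤ X := by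
      have he : (1 : ℝ) ≤ Real.exp s := Real.one_le_exp hs0
      calc (2 : ℝ) ≤ 3 * 1 := by norm_num
        _ ≤ (3 : ℝ) ^ A * Real.exp s := by
            nlinarith [Real.exp_pos s]

    have hstep : ((u d (n + 1) : ℕ) : ℝ) ≤ (Real.exp 1 * X) ^ d :=
      step_aux d (u d n) X hd hX2 ih
    refine hstep.trans ?_
    have hrw : (Real.exp 1 * X) ^ d =
        (3 : ℝ) ^ (A * d) * Real.exp ((s + 1) * d) := by
      rw [hXdef, mul_pow, mul_pow, ← Real.rpow_natCast ((3:ℝ) ^ A) d,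
        ← Real.rpow_mul (by norm_num : (0:ℝ) ≤ 3), ← Real.exp_nat_mul,
        ← Real.exp_nat_mul]
      rw [show (s + 1) * (d : ℝ) = (d : ℝ) * s + (d : ℝ) * 1 by ring, Real.exp_add]
      ring
    rw [hrw]
    have hAd : A * d = (d : ℝ) ^ (n + 1 - 1) := by
      rw [hA, Nat.add_sub_cancel, ← pow_succ]
      congr 1
      omega
    have hsd : (s + 1) * d = ((d : ℝ) ^ (n + 1) - 1) / ((d : ℝ) - 1) - 1 := by
      rw [hs]
      field_simp
      ring
    rw [hAd, hsd]
end

section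
/- log #T_{≤H,≤d} = Θ(d^{H-1}) as d → ∞ for fixed H ≥ 2; more precisely, combining the bounds on u_H(d) there exist constants (for each fixed H ≥ 2) 0 < c₁ ≤ c₂ such that c₁ d^{H-1} ≤ log(u_H(d) - 1) ≤ c₂ d^{H-1} for all sufficiently large d. -/
lemma choose_upper (n d : ℕ) : (n + d).choose d ≤ (n + 1) ^ d := by
  induction d with
  | zero => simp
  | succ d ih =>
    have key : (n + d + 1) * ((n + d).choose d) = (n + (d + 1)).choose (d + 1) * (d + 1) := by
      have := Nat.add_one_mul_choose_eq (n + d) d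
      simpa [Nat.succ_eq_add_one, Nat.add_assoc] using this
    have h1 : (n + (d + 1)).choose (d + 1) * (d + 1) ≤ (n + 1) ^ (d + 1) * (d + 1) := by
      rw [← key]
      calc (n + d + 1) * ((n + d).choose d) ≤ (n + d + 1) * (n + 1) ^ d :=
            Nat.mul_le_mul_left _ ih
        _ ≤ ((n + 1) * (d + 1)) * (n + 1) ^ d := by
            apply Nat.mul_le_mul_right; nlinarith
        _ = (n + 1) ^ (d + 1) * (d + 1) := by ring
    exact Nat.le_of_mul_le_mul_right h1 (Nat.succ_pos d)

lemma choose_lower (m n d : ℕ) (h : m * d ≤ n) : (m + 1) ^ d ≤ (n + d).choose d := by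
  induction d with
  | zero => simp
  | succ d ih =>
    have hd : m * d ≤ n := le_trans (Nat.mul_le_mul_left m (Nat.le_succ d)) h
    have key : (n + d + 1) * ((n + d).choose d) = (n + (d + 1)).choose (d + 1) * (d + 1) := by
      have := Nat.add_one_mul_choose_eq (n + d) d
      simpa [Nat.succ_eq_add_one, Nat.add_assoc] using this
    have h1 : (m + 1) ^ (d + 1) * (d + 1) ≤ (n + (d + 1)).choose (d + 1) * (d + 1) := by
      rw [← key]
      calc (m + 1) ^ (d + 1) * (d + 1) = ((m + 1) * (d + 1)) * (m + 1) ^ d := by ring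
        _ ≤ (n + d + 1) * (m + 1) ^ d := by
            apply Nat.mul_le_mul_right; nlinarith
        _ ≤ (n + d + 1) * ((n + d).choose d) := Nat.mul_le_mul_left _ (ih hd)
    exact Nat.le_of_mul_le_mul_right h1 (Nat.succ_pos d)

lemma log_le_two_sqrt {x : ℝ} (hx : 0 ≤ x) : Real.log x ≤ 2 * Real.sqrt x := by
  rcases eq_or_lt_of_le hx with h | h
  · simp [← h]
  have hs : (0:ℝ) < Real.sqrt x := Real.sqrt_pos.2 h
  have := Real.log_le_sub_one_of_pos hs
  have h2 : Real.log (Real.sqrt x) = Real.log x / 2 := Real.log_sqrt hx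
  linarith

/-- Two-sided bound on `log (u d H)`. -/
lemma main_bound (H : ℕ) (hH : 2 ≤ H) :
    ∃ c₁ c₂ : ℝ, 0 < c₁ ∧ c₁ ≤ c₂ ∧ ∃ D : ℕ, 2 ≤ D ∧ ∀ d : ℕ, D ≤ d →
      c₁ * (d : ℝ) ^ (H - 1) ≤ Real.log (u d H) ∧
        Real.log (u d H) ≤ c₂ * (d : ℝ) ^ (H - 1) := by
  induction H, hH using Nat.le_induction with
  | base =>
    refine ⟨Real.log 2, 3 * Real.log 2, Real.log_pos (by norm_num), by nlinarith [Real.log_pos (show (1:ℝ) < 2 by norm_num)], 2, le_refl 2, ?_⟩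
    intro d hd
    have hu1 : u d 1 = d + 1 := by
      show Nat.choose (1 + d) d = d + 1
      rw [Nat.add_comm]; exact Nat.choose_succ_self_right d
    have hu2 : u d 2 = Nat.choose (d + 1 + d) d := by
      show Nat.choose (u d 1 + d) d = _
      rw [hu1]
    have hlow : (2:ℕ) ^ d ≤ u d 2 := by
      rw [hu2]
      simpa using choose_lower 1 (d + 1) d (by omega)
    have hup : u d 2 ≤ 2 ^ (3 * d) := by
      rw [hu2]
      have h1 : Nat.choose (d + 1 + d) d ≤ 2 ^ (2 * d + 1) := by
        have : Nat.choose (2 * d + 1) d ≤ ∑ m ∈ Finset.range (2 * d + 1 + 1), (2 * d + 1).choose m :=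
          Finset.single_le_sum (f := fun m => (2 * d + 1).choose m) (fun _ _ => Nat.zero_le _)
            (Finset.mem_range.2 (by omega))
        rw [Nat.sum_range_choose] at this
        have he : d + 1 + d = 2 * d + 1 := by omega
        rwa [he]
      exact h1.trans (Nat.pow_le_pow_right (by norm_num) (by omega))
    constructor
    · have h1 : ((2:ℝ))^d ≤ (u d 2 : ℝ) := by exact_mod_cast hlow
      have h2 := Real.log_le_log (by positivity) h1
      rw [Real.log_pow] at h2
      calc Real.log 2 * (d:ℝ)^(2-1) = (d:ℕ) * Real.log 2 := by push_cast; ring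
        _ ≤ Real.log (u d 2) := h2
    · have hpos : (0:ℝ) < (u d 2 : ℝ) := by
        have : (1:ℕ) ≤ u d 2 := le_trans (Nat.one_le_two_pow) hlow
        exact_mod_cast Nat.lt_of_lt_of_le Nat.zero_lt_one this
      have := Real.log_le_log hpos (show ((u d 2 : ℕ) : ℝ) ≤ ((2:ℕ)^(3*d) : ℝ) by exact_mod_cast hup)
      rw [show ((2:ℕ)^(3*d) : ℝ) = (2:ℝ)^(3*d) by push_cast; ring, Real.log_pow] at this
      calc Real.log (u d 2) ≤ (3 * d : ℕ) * Real.log 2 := this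
        _ = 3 * Real.log 2 * (d:ℝ)^(2-1) := by push_cast; ring
  | succ H hH ih =>
    obtain ⟨c₁, c₂, hc₁, hc₁₂, D, hD2, hD⟩ := ih
    set D' : ℕ := max D (max 2 (⌈(16:ℝ)/c₁^2⌉₊ + 1)) with hD'
    refine ⟨c₁ / 2, c₂ + Real.log 2, by positivity, by nlinarith [Real.log_pos (show (1:ℝ) < 2 by norm_num)], D', le_trans (le_max_left 2 _) (le_max_right D _), ?_⟩
    intro d hd
    have hdD : D ≤ d := le_trans (le_max_left _ _) hd
    have hd2 : 2 ≤ d := le_trans ((le_max_left _ _).trans (le_max_right D _)) hd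
    have hd1 : (1:ℝ) ≤ (d:ℝ) := by exact_mod_cast le_trans (by norm_num) hd2
    have hdpos : (0:ℝ) < (d:ℝ) := by linarith
    obtain ⟨hlow, hup⟩ := hD d hdD
    -- basic facts
    have hpowd : (d:ℝ) ≤ (d:ℝ) ^ (H - 1) := by
      calc (d:ℝ) = (d:ℝ)^1 := (pow_one _).symm
        _ ≤ (d:ℝ)^(H-1) := pow_le_pow_right₀ hd1 (by omega)
    have hpow1 : (1:ℝ) ≤ (d:ℝ) ^ (H - 1) := by
      simpa using pow_le_pow_left₀ (by norm_num : (0:ℝ) ≤ 1) hd1 (H-1)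
    have hu2 : 2 ≤ u d H := by
      rcases Nat.lt_or_ge (u d H) 2 with hcon | hcon
      · exfalso
        have hle : ((u d H : ℕ) : ℝ) ≤ 1 := by exact_mod_cast Nat.lt_succ_iff.mp hcon
        have hlognp : Real.log ((u d H : ℕ) : ℝ) ≤ 0 := Real.log_nonpos (Nat.cast_nonneg _) hle
        have h1 : (1:ℝ) ≤ (d:ℝ)^(H-1) := le_trans hd1 hpowd
        nlinarith
      · exact hcon
    have hupos : (0:ℝ) < (u d H : ℝ) := by exact_mod_cast Nat.lt_of_lt_of_le Nat.zero_lt_two hu2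
    -- log d small
    have hlogd : Real.log d ≤ (c₁ / 2) * (d:ℝ)^(H-1) := by
      have h16 : (16:ℝ)/c₁^2 ≤ d := by
        have : (⌈(16:ℝ)/c₁^2⌉₊ + 1 : ℕ) ≤ d := le_trans ((le_max_right _ _).trans (le_max_right D _)) hd
        have h2 : ((⌈(16:ℝ)/c₁^2⌉₊ : ℕ) : ℝ) ≤ d := by exact_mod_cast le_trans (Nat.le_succ _) this
        exact le_trans (Nat.le_ceil _) h2
      have hsq : Real.log d ≤ 2 * Real.sqrt d := log_le_two_sqrt hdpos.le
      have hs : Real.sqrt d ≤ (c₁/4) * d := by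
        rw [show (c₁/4) * (d:ℝ) = (c₁/4) * (Real.sqrt d * Real.sqrt d) by
          rw [Real.mul_self_sqrt hdpos.le]]
        have hsd : (4:ℝ)/c₁ ≤ Real.sqrt d := by
          have : Real.sqrt ((16:ℝ)/c₁^2) ≤ Real.sqrt d := Real.sqrt_le_sqrt h16
          rwa [show (16:ℝ)/c₁^2 = ((4:ℝ)/c₁)^2 by field_simp; ring, Real.sqrt_sq (by positivity)] at this
        have hsp : (0:ℝ) < Real.sqrt d := lt_of_lt_of_le (by positivity) hsd
        have h4 : 4 ≤ c₁ * Real.sqrt d := by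
          rw [div_le_iff₀ hc₁] at hsd; linarith
        nlinarith [mul_le_mul_of_nonneg_right h4 hsp.le]
      calc Real.log d ≤ 2 * ((c₁/4) * d) := by linarith
        _ = (c₁/2) * (d:ℝ) := by ring
        _ ≤ (c₁/2) * (d:ℝ)^(H-1) := by nlinarith
    have hHsub : (H + 1) - 1 = (H - 1) + 1 := by omega
    have hdpow : (d:ℝ) ^ ((H+1)-1) = (d:ℝ)^(H-1) * d := by rw [hHsub, pow_succ]
    constructor
    · -- lower bound
      have hfloor : (u d H / d) * d ≤ u d H := Nat.div_mul_le_self _ _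
      have hchoose : (u d H / d + 1) ^ d ≤ u d (H+1) := by
        show _ ≤ Nat.choose (u d H + d) d
        exact choose_lower _ _ _ hfloor
      have hdivle : (u d H : ℝ) / d ≤ (u d H / d + 1 : ℕ) := by
        have hnat : u d H < (u d H / d + 1) * d := by
          have hdm := Nat.div_add_mod (u d H) d
          have hmod : u d H % d < d := Nat.mod_lt _ (by omega)
          calc u d H = d * (u d H / d) + u d H % d := hdm.symm
            _ < d * (u d H / d) + d := by omega
            _ = (u d H / d + 1) * d := by ring
        rw [div_le_iff₀ hdpos]
        exact_mod_cast hnat.le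
      have hlog1 : Real.log ((u d H : ℝ) / d) ≤ Real.log ((u d H / d + 1 : ℕ)) :=
        Real.log_le_log (by positivity) hdivle
      have hlog2 : (d:ℝ) * Real.log ((u d H / d + 1 : ℕ)) ≤ Real.log (u d (H+1)) := by
        have h1 : (((u d H / d + 1 : ℕ) : ℝ)) ^ d ≤ (u d (H+1) : ℝ) := by exact_mod_cast hchoose
        have h2 := Real.log_le_log (by positivity) h1
        rwa [Real.log_pow] at h2
      have hlog3 : Real.log ((u d H : ℝ) / d) = Real.log (u d H) - Real.log d :=
        Real.log_div (ne_of_gt hupos) (ne_of_gt hdpos)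
      have : (d:ℝ) * (Real.log (u d H) - Real.log d) ≤ Real.log (u d (H+1)) := by
        calc (d:ℝ) * (Real.log (u d H) - Real.log d) = (d:ℝ) * Real.log ((u d H : ℝ)/d) := by
              rw [hlog3]
          _ ≤ (d:ℝ) * Real.log ((u d H / d + 1 : ℕ)) := by
              apply mul_le_mul_of_nonneg_left hlog1 hdpos.le
          _ ≤ Real.log (u d (H+1)) := hlog2
      calc c₁ / 2 * (d:ℝ)^((H+1)-1) = (d:ℝ) * ((c₁ * (d:ℝ)^(H-1)) - (c₁/2) * (d:ℝ)^(H-1)) := by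
            rw [hdpow]; ring
        _ ≤ (d:ℝ) * (Real.log (u d H) - Real.log d) := by
            apply mul_le_mul_of_nonneg_left _ hdpos.le
            have := hlogd; linarith
        _ ≤ Real.log (u d (H+1)) := this
    · -- upper bound
      have hchoose : u d (H+1) ≤ (u d H + 1) ^ d := by
        show Nat.choose (u d H + d) d ≤ _
        exact choose_upper _ _
      have hupos1 : (0:ℝ) < ((u d (H+1) : ℕ) : ℝ) := by
        have h1 : 1 ≤ u d (H+1) := by
          show 1 ≤ Nat.choose (u d H + d) d
          have := choose_lower (u d H / d) (u d H) d (Nat.div_mul_le_self _ _)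
          calc 1 ≤ (u d H / d + 1)^d := Nat.one_le_pow _ _ (Nat.succ_pos _)
            _ ≤ _ := this
        exact_mod_cast Nat.lt_of_lt_of_le Nat.zero_lt_one h1
      have h2 : Real.log (u d (H+1)) ≤ (d:ℝ) * Real.log ((u d H + 1 : ℕ)) := by
        have h1 : ((u d (H+1) : ℕ) : ℝ) ≤ (((u d H + 1 : ℕ) : ℝ)) ^ d := by exact_mod_cast hchoose
        have := Real.log_le_log hupos1 h1
        rwa [Real.log_pow] at this
      have h3 : Real.log ((u d H + 1 : ℕ)) ≤ Real.log (u d H) + Real.log 2 := by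
        have hle : ((u d H + 1 : ℕ) : ℝ) ≤ 2 * (u d H : ℝ) := by
          push_cast
          have : (2:ℝ) ≤ (u d H : ℝ) := by exact_mod_cast hu2
          linarith
        calc Real.log ((u d H + 1 : ℕ)) ≤ Real.log (2 * (u d H : ℝ)) :=
              Real.log_le_log (by positivity) hle
          _ = Real.log 2 + Real.log (u d H) := Real.log_mul (by norm_num) (ne_of_gt hupos)
          _ = Real.log (u d H) + Real.log 2 := by ring
      have hlog2pos : (0:ℝ) < Real.log 2 := Real.log_pos (by norm_num)
      calc Real.log (u d (H+1)) ≤ (d:ℝ) * (Real.log (u d H) + Real.log 2) := by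
            apply h2.trans; apply mul_le_mul_of_nonneg_left h3 hdpos.le
        _ ≤ (d:ℝ) * (c₂ * (d:ℝ)^(H-1) + Real.log 2 * (d:ℝ)^(H-1)) := by
            apply mul_le_mul_of_nonneg_left _ hdpos.le
            have : Real.log 2 ≤ Real.log 2 * (d:ℝ)^(H-1) := by nlinarith
            linarith
        _ = (c₂ + Real.log 2) * (d:ℝ)^((H+1)-1) := by rw [hdpow]; ring

/-- For every fixed `H ≥ 2` there are constants `0 < c₁ ≤ c₂` such that
`c₁ d^{H-1} ≤ log(u_H(d) - 1) ≤ c₂ d^{H-1}` for all sufficiently large `d`;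
i.e. `log #T_{≤H,≤d} = Θ(d^{H-1})` as `d → ∞`. -/
theorem stmt_7 (H : ℕ) (hH : 2 ≤ H) :
    ∃ c₁ c₂ : ℝ, 0 < c₁ ∧ c₁ ≤ c₂ ∧ ∃ D : ℕ, ∀ d : ℕ, D ≤ d →
      c₁ * (d : ℝ) ^ (H - 1) ≤ Real.log ((u d H - 1 : ℕ) : ℝ) ∧
        Real.log ((u d H - 1 : ℕ) : ℝ) ≤ c₂ * (d : ℝ) ^ (H - 1) := by
  obtain ⟨c₁, c₂, hc₁, hc₁₂, D, hD2, hD⟩ := main_bound H hH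
  refine ⟨c₁ / 2, c₂, by positivity, by linarith, max D (⌈2 * Real.log 2 / c₁⌉₊ + 1), ?_⟩
  intro d hd
  have hdD : D ≤ d := le_trans (le_max_left _ _) hd
  have hd2 : 2 ≤ d := le_trans hD2 hdD
  have hd1 : (1:ℝ) ≤ (d:ℝ) := by exact_mod_cast le_trans (by norm_num) hd2
  obtain ⟨hlow, hup⟩ := hD d hdD
  have hpowd : (d:ℝ) ≤ (d:ℝ) ^ (H - 1) := by
    calc (d:ℝ) = (d:ℝ)^1 := (pow_one _).symm
      _ ≤ (d:ℝ)^(H-1) := pow_le_pow_right₀ hd1 (by omega)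
  have hu2 : 2 ≤ u d H := by
    rcases Nat.lt_or_ge (u d H) 2 with hcon | hcon
    · exfalso
      have hle : ((u d H : ℕ) : ℝ) ≤ 1 := by exact_mod_cast Nat.lt_succ_iff.mp hcon
      have hlognp : Real.log ((u d H : ℕ) : ℝ) ≤ 0 := Real.log_nonpos (Nat.cast_nonneg _) hle
      have h1 : (1:ℝ) ≤ (d:ℝ)^(H-1) := le_trans hd1 hpowd
      nlinarith
    · exact hcon
  have hupos : (0:ℝ) < (u d H : ℝ) := by exact_mod_cast Nat.lt_of_lt_of_le Nat.zero_lt_two hu2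
  have hcast : ((u d H - 1 : ℕ) : ℝ) = (u d H : ℝ) - 1 := by
    have : 1 ≤ u d H := by omega
    push_cast [this]; ring
  have hhalf : (u d H : ℝ) / 2 ≤ ((u d H - 1 : ℕ) : ℝ) := by
    rw [hcast]
    have : (2:ℝ) ≤ (u d H : ℝ) := by exact_mod_cast hu2
    linarith
  constructor
  · have hlog1 : Real.log ((u d H : ℝ) / 2) ≤ Real.log ((u d H - 1 : ℕ) : ℝ) :=
      Real.log_le_log (by positivity) hhalf
    rw [Real.log_div (ne_of_gt hupos) (by norm_num)] at hlog1
    have hlogd : Real.log 2 ≤ (c₁/2) * (d:ℝ)^(H-1) := by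
      have hceil : ((⌈2 * Real.log 2 / c₁⌉₊ : ℕ) : ℝ) ≤ d := by
        have : (⌈2 * Real.log 2 / c₁⌉₊ + 1 : ℕ) ≤ d := le_trans (le_max_right _ _) hd
        exact_mod_cast le_trans (Nat.le_succ _) this
      have h1 : 2 * Real.log 2 / c₁ ≤ d := le_trans (Nat.le_ceil _) hceil
      have h2 : 2 * Real.log 2 ≤ c₁ * d := by
        rw [div_le_iff₀ hc₁] at h1; linarith
      nlinarith
    linarith
  · have hlog2 : Real.log ((u d H - 1 : ℕ) : ℝ) ≤ Real.log (u d H) := by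
      apply Real.log_le_log
      · rw [hcast]
        have : (2:ℝ) ≤ (u d H : ℝ) := by exact_mod_cast hu2
        linarith
      · rw [hcast]; linarith
    linarith
end

section
/- For any integer d ≥ 1, max over partitions of the worst-case height-2 editing cost equals ⌊d/2⌋ · ⌈d/2⌉; in particular with n = 2, p₁ = ⌈d/2⌉, p₂ = ⌊d/2⌋, l₁ = ⌊d/2⌋, l₂ = d, the quantity min_{x ∈ ℕ, A ⊆ {1,2}} [ Σ_{k∈A} p_k l_k + Σ_{k∉A} p_k |l_k − x| ] equals ⌊d/2⌋ · ⌈d/2⌉. -/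
/-!
Deleting the classes in `A` costs `p_k l_k` and editing the others costs `p_k |l_k - x|`, so every
choice costs at least `∑_k p_k min(l_k, |l_k - x|)`. With `m = ⌊d/2⌋`, `M = ⌈d/2⌉`, the only way to
beat `m M` on the first class is `|m - x| < m`; if the second class is then deleted it costs
`m d ≥ m M`, and otherwise both are edited at cost at least `m (|m - x| + |d - x|) ≥ m (d - m) = m M`.
Keeping the first class and editing the second to `x = d` attains `m M`.
-/

theorem sum_min_le_sum_add_sum_compl {ι M : Type*} [Fintype ι] [DecidableEq ι]
    [AddCommMonoid M] [LinearOrder M] [IsOrderedAddMonoid M]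
    (f g : ι → M) (A : Finset ι) :
    ∑ k, min (f k) (g k) ≤ ∑ k ∈ A, f k + ∑ k ∈ Aᶜ, g k := by
  rw [← Finset.sum_add_sum_compl A]
  gcongr with k
  · exact min_le_left _ _
  · exact min_le_right _ _

theorem mul_le_mul_min_add_mul_min {m M l u v : ℕ} (hmM : m ≤ M) (hMl : M ≤ l)
    (huv : M ≤ u + v) :
    m * M ≤ M * min m u + m * min l v := by
  rcases le_total m u with hmu | hum
  · rw [min_eq_left hmu, mul_comm]
    exact Nat.le_add_right _ _
  rcases le_total l v with hlv | hvl
  · rw [min_eq_left hlv]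
    exact le_add_left (Nat.mul_le_mul_left m hMl)
  · rw [min_eq_right hum, min_eq_right hvl]
    calc m * M ≤ m * (u + v) := Nat.mul_le_mul_left m huv
      _ = m * u + m * v := mul_add m u v
      _ ≤ M * u + m * v := Nat.add_le_add_right (Nat.mul_le_mul_right u hmM) _

open Finset in
theorem stmt_14_general (d : ℕ) :
    IsLeast
      {c : ℕ | ∃ x : ℕ, ∃ A : Finset (Fin 2),
        c = ∑ k ∈ A, ![(d + 1) / 2, d / 2] k * ![d / 2, d] k +
            ∑ k ∈ Aᶜ, ![(d + 1) / 2, d / 2] k * ((![d / 2, d] k : ℤ) - (x : ℤ)).natAbs}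
      (d / 2 * ((d + 1) / 2)) := by
  constructor
  · refine ⟨d, {0}, ?_⟩
    have hcompl : ({0} : Finset (Fin 2))ᶜ = {1} := by decide
    simp [hcompl, mul_comm]
  · rintro c ⟨x, A, rfl⟩
    refine le_trans ?_ (sum_min_le_sum_add_sum_compl _ _ A)
    simp only [Fin.sum_univ_two, Nat.mul_min_mul_left, Matrix.cons_val_zero, Matrix.cons_val_one]
    exact mul_le_mul_min_add_mul_min (by omega) (by omega) (by omega)

open Finset in
/-- With two height-1 classes, `p₁ = ⌈d/2⌉`, `p₂ = ⌊d/2⌋`, `l₁ = ⌊d/2⌋`, `l₂ = d`,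
the minimum over `x ∈ ℕ` and `A ⊆ {1,2}` of
`∑_{k∈A} p_k l_k + ∑_{k∉A} p_k |l_k − x|` equals `⌊d/2⌋ · ⌈d/2⌉`. -/
theorem stmt_14 (d : ℕ) (hd : 1 ≤ d) :
    IsLeast
      {c : ℕ | ∃ x : ℕ, ∃ A : Finset (Fin 2),
        c = ∑ k ∈ A, ![(d + 1) / 2, d / 2] k * ![d / 2, d] k +
            ∑ k ∈ Aᶜ, ![(d + 1) / 2, d / 2] k * ((![d / 2, d] k : ℤ) - (x : ℤ)).natAbs}
      (d / 2 * ((d + 1) / 2)) :=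
  stmt_14_general d
end

section
/- For integers H ≥ 1 and d ≥ 1, #T^{sn}_{=H,≤d} = Γ(d)^{-H} · ∏_{i=1}^H Γ(d+H−i+1)/Γ(H−i+2), equivalently ∏_{i=1}^H C(d+H−i, H−i+1) = ∏_{i=1}^H ( (d+i−1)! / ( i! · (d−1)! ) ). -/
/-!
Substituting `k = H - i + 1`, the `i`-th factor is `C(d + k - 1, k) = (d + k - 1)! / (k! (d - 1)!)`.
Writing the factorials as Gamma values gives the first form; reversing the order of the product
(`k ↔ i`) gives the second.
-/

open Finset
open scoped Nat

theorem Finset.prod_Icc_one_reflect {M : Type*} [CommMonoid M] (f : ℕ → M) (n : ℕ) :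
    ∏ i ∈ Icc 1 n, f (n + 1 - i) = ∏ i ∈ Icc 1 n, f i := by
  refine prod_nbij' (fun i => n + 1 - i) (fun i => n + 1 - i) ?_ ?_ ?_ ?_ ?_ <;>
    intro i hi <;> simp only [mem_Icc] at hi ⊢ <;> omega

theorem Real.Gamma_natCast_of_pos {d : ℕ} (hd : 1 ≤ d) : Real.Gamma d = (d - 1)! := by
  rw [← Real.Gamma_nat_eq_factorial, Nat.cast_sub hd, Nat.cast_one, sub_add_cancel]

theorem Nat.cast_choose_add_sub_one {d : ℕ} (hd : 1 ≤ d) (k : ℕ) :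
    ((d + k - 1).choose k : ℝ) = (d + k - 1)! / (k ! * (d - 1)!) := by
  rw [Nat.cast_choose ℝ (by omega), show d + k - 1 - k = d - 1 by omega]

theorem Nat.cast_choose_add_sub_one_eq_Gamma {d : ℕ} (hd : 1 ≤ d) (k : ℕ) :
    ((d + k - 1).choose k : ℝ) = Real.Gamma (d + k) / Real.Gamma (k + 1) / Real.Gamma d := by
  rw [Nat.cast_choose_add_sub_one hd, Real.Gamma_natCast_of_pos hd, Real.Gamma_nat_eq_factorial,
    ← Nat.cast_add, Real.Gamma_natCast_of_pos (by omega), div_div]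

theorem stmt_16_general (H d : ℕ) (hd : 1 ≤ d) :
    ((∏ i ∈ Icc 1 H, Nat.choose (d + H - i) (H - i + 1) : ℕ) : ℝ) =
        Real.Gamma d ^ (-(H : ℤ)) *
          ∏ i ∈ Icc 1 H, Real.Gamma (d + H - i + 1) / Real.Gamma ((H : ℝ) - i + 2) ∧
      ((∏ i ∈ Icc 1 H, Nat.choose (d + H - i) (H - i + 1) : ℕ) : ℝ) =
        ∏ i ∈ Icc 1 H,
          ((d + i - 1).factorial : ℝ) / (i.factorial * (d - 1).factorial) := by
  have hreindex : ((∏ i ∈ Icc 1 H, Nat.choose (d + H - i) (H - i + 1) : ℕ) : ℝ) =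
      ∏ i ∈ Icc 1 H, ((d + (H + 1 - i) - 1).choose (H + 1 - i) : ℝ) := by
    push_cast
    refine prod_congr rfl fun i hi => ?_
    rw [mem_Icc] at hi
    rw [show d + (H + 1 - i) - 1 = d + H - i by omega, show H + 1 - i = H - i + 1 by omega]
  rw [hreindex]
  constructor
  · have hpow : Real.Gamma d ^ (-(H : ℤ)) = ∏ _i ∈ Icc 1 H, (Real.Gamma d)⁻¹ := by
      rw [prod_const, Nat.card_Icc, Nat.add_sub_cancel, zpow_neg, zpow_natCast, inv_pow]
    rw [hpow, ← prod_mul_distrib]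
    refine prod_congr rfl fun i hi => ?_
    rw [mem_Icc] at hi
    rw [Nat.cast_choose_add_sub_one_eq_Gamma hd, Nat.cast_sub (by omega)]
    push_cast
    ring_nf
  · rw [prod_Icc_one_reflect (fun k => ((d + k - 1).choose k : ℝ))]
    exact prod_congr rfl fun k _ => Nat.cast_choose_add_sub_one hd k

open Finset in
/-- For `H ≥ 1`, `d ≥ 1`:
`#T^{sn}_{=H,≤d} = ∏_{i=1}^H C(d+H−i, H−i+1) = Γ(d)^{-H} · ∏_{i=1}^H Γ(d+H−i+1)/Γ(H−i+2)`,
equivalently `∏_{i=1}^H C(d+H−i, H−i+1) = ∏_{i=1}^H (d+i−1)! / (i!·(d−1)!)`. -/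
theorem stmt_16 (H d : ℕ) (hH : 1 ≤ H) (hd : 1 ≤ d) :
    ((∏ i ∈ Icc 1 H, Nat.choose (d + H - i) (H - i + 1) : ℕ) : ℝ) =
        Real.Gamma d ^ (-(H : ℤ)) *
          ∏ i ∈ Icc 1 H, Real.Gamma (d + H - i + 1) / Real.Gamma ((H : ℝ) - i + 2) ∧
      ((∏ i ∈ Icc 1 H, Nat.choose (d + H - i) (H - i + 1) : ℕ) : ℝ) =
        ∏ i ∈ Icc 1 H,
          ((d + i - 1).factorial : ℝ) / (i.factorial * (d - 1).factorial) :=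
  stmt_16_general H d hd
end

section
/- An unordered rooted tree τ is self-nested (all subtrees of equal height are isomorphic) if and only if for every pair of vertices v, w with height(τ[v]) ≤ height(τ[w]), τ[v] is isomorphic to a subtree of τ[w]. -/
inductive UTree : Type where
  | node : List UTree → UTree

namespace UTree

def size : UTree → ℕ
  | node l => 1 + (l.attach.map fun x => size x.1).sum
decreasing_by
  have := List.sizeOf_lt_of_mem x.2
  simp only [node.sizeOf_spec]
  omega

def height : UTree → ℕ
  | node l => (l.attach.map fun x => height x.1 + 1).foldr max 0
decreasing_by
  have := List.sizeOf_lt_of_mem x.2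
  simp only [node.sizeOf_spec]
  omega

def degree : UTree → ℕ
  | node l => max l.length ((l.attach.map fun x => degree x.1).foldr max 0)
decreasing_by
  have := List.sizeOf_lt_of_mem x.2
  simp only [node.sizeOf_spec]
  omega

inductive Iso : UTree → UTree → Prop where
  | node {l₁ l₂ : List UTree} (h : l₁.length = l₂.length) (σ : Equiv.Perm (Fin l₁.length)) :
      (∀ i : Fin l₁.length, Iso (l₁.get i) (l₂.get (Fin.cast h (σ i)))) →
      Iso (node l₁) (node l₂)

inductive Ins : UTree → UTree → Prop where
  | here (l : List UTree) : Ins (node l) (node (node [] :: l))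
  | there {t t' : UTree} (l₁ l₂ : List UTree) :
      Ins t t' → Ins (node (l₁ ++ t :: l₂)) (node (l₁ ++ t' :: l₂))

inductive EIns : Option UTree → Option UTree → Prop where
  | root : EIns none (some (node []))
  | lift {t t' : UTree} : Ins t t' → EIns (some t) (some t')

def Step (a b : Option UTree) : Prop := EIns a b ∨ EIns b a

inductive Chain : ℕ → Option UTree → Option UTree → Prop where
  | refl (a : Option UTree) : Chain 0 a a
  | step {a b c : Option UTree} {n : ℕ} : Step a b → Chain n b c → Chain (n + 1) a c

def OIso : Option UTree → Option UTree → Prop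
  | none, none => True
  | some a, some b => Iso a b
  | _, _ => False

noncomputable def edist (a b : Option UTree) : ℕ :=
  sInf {n : ℕ | ∃ c, Chain n a c ∧ OIso c b}

inductive IsSubtree : UTree → UTree → Prop where
  | refl (t : UTree) : IsSubtree t t
  | child {s c : UTree} {l : List UTree} : c ∈ l → IsSubtree s c → IsSubtree s (node l)

def SelfNested (τ : UTree) : Prop :=
  ∀ s t : UTree, IsSubtree s τ → IsSubtree t τ → height s = height t → Iso s t

end UTree

/-!
A subtree of `t` with the height of `t` is `t` itself, so "isomorphic to a subtree of `t`" and
"isomorphic to `t`" coincide when the heights agree. Conversely, every tree has subtrees of every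
height up to its own, so self-nestedness provides the required isomorphic copy inside `t`.
-/

theorem List.foldr_max_le_iff {l : List ℕ} {k : ℕ} : l.foldr max 0 ≤ k ↔ ∀ x ∈ l, x ≤ k := by
  induction l with
  | nil => simp
  | cons a l ih => simp [ih]

namespace UTree

theorem height_node_le_iff {l : List UTree} {k : ℕ} :
    height (node l) ≤ k ↔ ∀ c ∈ l, height c + 1 ≤ k := by
  simp [height, List.foldr_max_le_iff]

theorem height_lt_of_mem {c : UTree} {l : List UTree} (h : c ∈ l) :
    height c < height (node l) :=
  height_node_le_iff.mp le_rfl c h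

theorem exists_mem_height_add_one_ge {l : List UTree} (h : 0 < height (node l)) :
    ∃ c ∈ l, height (node l) ≤ height c + 1 := by
  by_contra! hlt
  have := height_node_le_iff.mpr fun c hc => Nat.le_sub_one_of_lt (hlt c hc)
  omega

theorem height_node_le_of_forall_exists {l₁ l₂ : List UTree}
    (h : ∀ c ∈ l₁, ∃ d ∈ l₂, height c = height d) : height (node l₁) ≤ height (node l₂) :=
  height_node_le_iff.mpr fun c hc => by
    obtain ⟨d, hd, hcd⟩ := h c hc
    exact hcd ▸ height_lt_of_mem hd

theorem Iso.height_eq {a b : UTree} (h : Iso a b) : height a = height b := by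
  induction h with
  | @node l₁ l₂ hlen σ _ ih =>
    apply le_antisymm <;> apply height_node_le_of_forall_exists
    · intro c hc
      obtain ⟨i, rfl⟩ := List.mem_iff_get.mp hc
      exact ⟨_, List.get_mem _ _, ih i⟩
    · intro d hd
      obtain ⟨j, rfl⟩ := List.mem_iff_get.mp hd
      refine ⟨l₁.get (σ.symm (Fin.cast hlen.symm j)), List.get_mem _ _, ?_⟩
      simpa using (ih (σ.symm (Fin.cast hlen.symm j))).symm

theorem IsSubtree.trans {a b c : UTree} (hab : IsSubtree a b) (hbc : IsSubtree b c) :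
    IsSubtree a c := by
  induction hbc with
  | refl => exact hab
  | child hm _ ih => exact .child hm ih

theorem IsSubtree.height_le {s t : UTree} (h : IsSubtree s t) : height s ≤ height t := by
  induction h with
  | refl => exact le_rfl
  | child hc _ ih => exact ih.trans (height_lt_of_mem hc).le

theorem IsSubtree.eq_of_height_le {u t : UTree} (h : IsSubtree u t) (hh : height t ≤ height u) :
    u = t := by
  cases h with
  | refl => rfl
  | child hm hsub => exact absurd hh (hsub.height_le.trans_lt (height_lt_of_mem hm)).not_ge

theorem exists_isSubtree_height_eq (t : UTree) {h : ℕ} (hh : h ≤ height t) :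
    ∃ u, IsSubtree u t ∧ height u = h := by
  match t with
  | node l =>
    rcases hh.eq_or_lt with heq | hlt
    · exact ⟨node l, .refl _, heq.symm⟩
    · obtain ⟨c, hc, hch⟩ := exists_mem_height_add_one_ge (h.zero_le.trans_lt hlt)
      obtain ⟨u, hu, rfl⟩ := exists_isSubtree_height_eq c (show h ≤ height c by omega)
      exact ⟨u, .child hc hu, rfl⟩
termination_by sizeOf t
decreasing_by
  have := List.sizeOf_lt_of_mem hc
  simp only [node.sizeOf_spec]
  omega

end UTree

open UTree in
/-- A tree is self-nested (all subtrees of equal height are isomorphic) iff for every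
pair of subtrees `s, t` with `height s ≤ height t`, `s` is isomorphic to a subtree
of `t`. -/
theorem stmt_19 (τ : UTree) :
    τ.SelfNested ↔
      ∀ s t : UTree, IsSubtree s τ → IsSubtree t τ → height s ≤ height t →
        ∃ u : UTree, IsSubtree u t ∧ Iso s u := by
  constructor
  · intro hsn s t hs ht hle
    obtain ⟨u, hu, hhu⟩ := exists_isSubtree_height_eq t hle
    exact ⟨u, hu, hsn s u hs (hu.trans ht) hhu.symm⟩
  · intro H s t hs ht hst
    obtain ⟨u, hu, hsu⟩ := H s t hs ht hst.le
    obtain rfl : u = t := hu.eq_of_height_le (by rw [← hsu.height_eq, hst])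
    exact hsu
end
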